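/- For every n ∈ ℕ and x in a hypercomplex subspace M of dimension m+1 of a real alternative *-algebra, with orthonormal basis B = (1, v₁, …, v_m), the Cauchy–Riemann operator ∂̄_B = (1/2)(∂₀ + v₁∂₁ + ⋯ + v_m∂_m) satisfies ∂̄_B(x^n) = ((1-m)/2) (x - x^c)^{-1}(x^n - (x^c)^n) for x ∉ ℝ. -/

import Mathlib

/-!
Write `x = x₀ + w` with `w = ∑_{i ≠ 0} xᵢ vᵢ`. The Clifford relations give
`vᵢ w + w vᵢ = -2 xᵢ` and `w² = -|w|²`, so `1` and `w` span a copy of the commutative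
quadratic algebra `K = ℝ[ω]/(ω² + |w|²)`, in which every power `xⁿ = pₙ + qₙ w` is computed.
Differentiating `xⁿ⁺¹ = xⁿ x` and moving `vᵢ` past `w` gives, by induction, `∂₀ xⁿ = n xⁿ⁻¹`
and `∂ᵢ xⁿ = xᵢ σₙ + qₙ vᵢ` for `i ≠ 0`, with `σₙ ∈ K` and `n xⁿ⁻¹ + w σₙ = qₙ`.
Hence `∑ vᵢ ∂ᵢ xⁿ = w σₙ - m qₙ` and `2 ∂̄ xⁿ = (1 - m) qₙ`, while `xⁿ - (xᶜ)ⁿ = qₙ (x - xᶜ)`.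
-/

noncomputable section
namespace PaperStmt

variable {A : Type*} [NormedAddCommGroup A] [NormedSpace ℝ A] [One A] [Mul A] {m : ℕ}

/-- Partial derivative in the `i`-th coordinate direction. -/
def pd (i : Fin (m + 1)) (f : (Fin (m + 1) → ℝ) → A) : (Fin (m + 1) → ℝ) → A :=
  fun x => fderiv ℝ f x (Pi.single i 1)

/-- The Cauchy–Riemann operator `∂̄_B = (1/2)(∂₀ + ∑ᵢ vᵢ ∂ᵢ)` induced by the
basis `B = (1, v₁, …, v_m)` (so `v 0 = 1`). -/
def dbar (v : Fin (m + 1) → A) (f : (Fin (m + 1) → ℝ) → A) : (Fin (m + 1) → ℝ) → A :=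
  fun x => (2 : ℝ)⁻¹ •
    (pd 0 f x + ∑ i ∈ Finset.univ.erase (0 : Fin (m + 1)), v i * pd i f x)

/-- Powers in a (not necessarily associative) algebra, bracketed to the left. -/
def pw (a : A) : ℕ → A
  | 0 => 1
  | n + 1 => pw a n * a

/-- The point of the hypercomplex subspace `M` with coordinates `x` w.r.t. the
basis `(1, v₁, …, v_m)`. -/
def iot (v : Fin (m + 1) → A) (x : Fin (m + 1) → ℝ) : A :=
  ∑ i : Fin (m + 1), x i • v i

/-- The *-conjugate `xᶜ` of the point with coordinates `x`. -/
def iotConj (v : Fin (m + 1) → A) (x : Fin (m + 1) → ℝ) : A :=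
  x 0 • (1 : A) - ∑ i ∈ Finset.univ.erase (0 : Fin (m + 1)), x i • v i

open Finset QuadraticAlgebra

section Bilinear

variable {𝔸 : Type*} [NormedAddCommGroup 𝔸] [NormedSpace ℝ 𝔸] [Mul 𝔸]
  (hbil : IsBoundedBilinearMap ℝ fun p : 𝔸 × 𝔸 => p.1 * p.2)
include hbil

theorem _root_.IsBoundedBilinearMap.mul_add (a b c : 𝔸) : a * (b + c) = a * b + a * c :=
  hbil.add_right a b c

theorem _root_.IsBoundedBilinearMap.add_mul (a b c : 𝔸) : (a + b) * c = a * c + b * c :=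
  hbil.add_left a b c

theorem _root_.IsBoundedBilinearMap.smul_mul (r : ℝ) (a b : 𝔸) : (r • a) * b = r • (a * b) :=
  hbil.smul_left r a b

theorem _root_.IsBoundedBilinearMap.mul_smul (r : ℝ) (a b : 𝔸) : a * (r • b) = r • (a * b) :=
  hbil.smul_right r a b

theorem _root_.IsBoundedBilinearMap.mul_sum {ι : Type*} (s : Finset ι) (f : ι → 𝔸) (a : 𝔸) :
    a * ∑ i ∈ s, f i = ∑ i ∈ s, a * f i :=
  map_sum (hbil.toContinuousLinearMap a) f s

theorem _root_.IsBoundedBilinearMap.sum_mul {ι : Type*} (s : Finset ι) (f : ι → 𝔸) (a : 𝔸) :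
    (∑ i ∈ s, f i) * a = ∑ i ∈ s, f i * a :=
  map_sum (hbil.toContinuousLinearMap.flip a) f s

variable {E : Type*} [NormedAddCommGroup E] [NormedSpace ℝ E] {f g : E → 𝔸} {x : E}

theorem _root_.IsBoundedBilinearMap.hasFDerivAt_mul {f' g' : E →L[ℝ] 𝔸} (hf : HasFDerivAt f f' x)
    (hg : HasFDerivAt g g' x) :
    HasFDerivAt (fun c => f c * g c) ((hbil.deriv (f x, g x)).comp (f'.prod g')) x :=
  HasFDerivAt.comp (g := fun p : 𝔸 × 𝔸 => p.1 * p.2) x (hbil.hasFDerivAt (f x, g x))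
    (hf.prodMk hg)

theorem _root_.IsBoundedBilinearMap.differentiableAt_mul (hf : DifferentiableAt ℝ f x)
    (hg : DifferentiableAt ℝ g x) :
    DifferentiableAt ℝ (fun c => f c * g c) x :=
  (hbil.hasFDerivAt_mul hf.hasFDerivAt hg.hasFDerivAt).differentiableAt

theorem _root_.IsBoundedBilinearMap.fderiv_mul_apply (hf : DifferentiableAt ℝ f x)
    (hg : DifferentiableAt ℝ g x) (h : E) :
    fderiv ℝ (fun c => f c * g c) x h = f x * fderiv ℝ g x h + fderiv ℝ f x h * g x := by
  rw [(hbil.hasFDerivAt_mul hf.hasFDerivAt hg.hasFDerivAt).fderiv]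
  rfl

end Bilinear

section Derivative

variable {E : Type*} [NormedAddCommGroup E] [NormedSpace ℝ E] {f : E → A} {x : E}
  (hbil : IsBoundedBilinearMap ℝ fun p : A × A => p.1 * p.2)
include hbil

theorem differentiableAt_pw (hf : DifferentiableAt ℝ f x) :
    ∀ n, DifferentiableAt ℝ (fun c => pw (f c) n) x
  | 0 => differentiableAt_const 1
  | n + 1 => hbil.differentiableAt_mul (differentiableAt_pw hf n) hf

theorem fderiv_pw_succ_apply (hf : DifferentiableAt ℝ f x) (n : ℕ) (h : E) :
    fderiv ℝ (fun c => pw (f c) (n + 1)) x h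
      = pw (f x) n * fderiv ℝ f x h + fderiv ℝ (fun c => pw (f c) n) x h * f x :=
  hbil.fderiv_mul_apply (differentiableAt_pw hbil hf n) hf h

end Derivative

section QuadraticLift

variable {𝔸 : Type*} [AddCommGroup 𝔸] [Module ℝ 𝔸] [One 𝔸] {a : ℝ}

def quadLift (u : 𝔸) : QuadraticAlgebra ℝ a 0 →ₗ[ℝ] 𝔸 :=
  (reₗ a 0).smulRight (1 : 𝔸) + (imₗ a 0).smulRight u

@[simp]
theorem quadLift_apply (u : 𝔸) (z : QuadraticAlgebra ℝ a 0) :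
    quadLift u z = z.re • 1 + z.im • u :=
  rfl

theorem quadLift_algebraMap (u : 𝔸) (r : ℝ) :
    quadLift u (algebraMap ℝ (QuadraticAlgebra ℝ a 0) r) = r • 1 := by
  simp

theorem quadLift_omega (u : 𝔸) : quadLift u (ω : QuadraticAlgebra ℝ a 0) = u := by
  simp

theorem quadLift_sub_quadLift_star (u : 𝔸) (z : QuadraticAlgebra ℝ a 0) :
    quadLift u z - quadLift u (star z) = (2 * z.im) • u := by
  simp only [quadLift_apply, re_star, im_star]
  module

end QuadraticLift

section QuadraticLiftMul

variable {a : ℝ} {u : A} (hbil : IsBoundedBilinearMap ℝ fun p : A × A => p.1 * p.2)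
  (hone : ∀ b : A, 1 * b = b) (hone' : ∀ b : A, b * 1 = b) (hu : u * u = a • 1)
include hbil hone hone' hu

theorem quadLift_mul (z z' : QuadraticAlgebra ℝ a 0) :
    quadLift u (z * z') = quadLift u z * quadLift u z' := by
  simp only [quadLift_apply, re_mul, im_mul, hbil.add_mul, hbil.mul_add, hbil.smul_mul,
    hbil.mul_smul, hone, hone', hu]
  module

theorem pw_quadLift (z : QuadraticAlgebra ℝ a 0) : ∀ n, pw (quadLift u z) n = quadLift u (z ^ n)
  | 0 => by simp [pw]
  | n + 1 => by rw [pw, pw_quadLift z n, pow_succ, quadLift_mul hbil hone hone' hu]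

end QuadraticLiftMul

section Clifford

variable {𝔸 : Type*} [NormedAddCommGroup 𝔸] [NormedSpace ℝ 𝔸] [One 𝔸]
  {v : Fin (m + 1) → 𝔸} (x : Fin (m + 1) → ℝ)

def imPart (v : Fin (m + 1) → 𝔸) (x : Fin (m + 1) → ℝ) : 𝔸 :=
  ∑ i ∈ univ.erase 0, x i • v i

def imNormSq (x : Fin (m + 1) → ℝ) : ℝ :=
  ∑ i ∈ univ.erase 0, x i ^ 2

def quadPoint (x : Fin (m + 1) → ℝ) : QuadraticAlgebra ℝ (-imNormSq x) 0 :=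
  ⟨x 0, 1⟩

theorem iot_eq_quadLift (hv0 : v 0 = 1) : iot v x = quadLift (imPart v x) (quadPoint x) := by
  rw [iot, ← add_sum_erase _ _ (mem_univ 0), hv0, quadLift_apply, quadPoint, one_smul, imPart]

theorem iotConj_eq_quadLift : iotConj v x = quadLift (imPart v x) (star (quadPoint x)) := by
  simp only [iotConj, imPart, quadPoint, quadLift_apply, re_star, im_star, zero_mul, add_zero,
    neg_smul, one_smul, sub_eq_add_neg]

variable [Mul 𝔸] (hbil : IsBoundedBilinearMap ℝ fun p : 𝔸 × 𝔸 => p.1 * p.2)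
  (hsq : ∀ i : Fin (m + 1), i ≠ 0 → v i * v i = -1)
  (hanti : ∀ i j : Fin (m + 1), i ≠ 0 → j ≠ 0 → i ≠ j → v i * v j = -(v j * v i))
include hbil hsq

theorem sum_mul_smul_add_smul (z : 𝔸) (q : ℝ) :
    ∑ i ∈ univ.erase 0, v i * (x i • z + q • v i) = imPart v x * z - (m * q) • 1 := by
  have hterm : ∀ i ∈ univ.erase (0 : Fin (m + 1)), v i * (x i • z + q • v i)
      = x i • (v i * z) - q • (1 : 𝔸) := by
    intro i hi
    rw [hbil.mul_add, hbil.mul_smul, hbil.mul_smul, hsq i (ne_of_mem_erase hi), smul_neg,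
      sub_eq_add_neg]
  rw [sum_congr rfl hterm, sum_sub_distrib, imPart, hbil.sum_mul, sum_const,
    card_erase_of_mem (mem_univ 0)]
  simp [hbil.smul_mul, mul_smul, Nat.cast_smul_eq_nsmul]

include hanti

theorem mul_imPart_add_imPart_mul {i : Fin (m + 1)} (hi : i ≠ 0) :
    v i * imPart v x + imPart v x * v i = (-2 * x i) • 1 := by
  have hpair : ∀ j ∈ univ.erase 0, v i * (x j • v j) + (x j • v j) * v i
      = if j = i then (-2 * x i) • (1 : 𝔸) else 0 := by
    intro j hj
    rw [hbil.mul_smul, hbil.smul_mul, ← smul_add]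
    split_ifs with hji
    · subst hji
      rw [hsq j hi]
      module
    · rw [hanti i j hi (ne_of_mem_erase hj) (Ne.symm hji), neg_add_cancel, smul_zero]
  rw [imPart, hbil.mul_sum, hbil.sum_mul, ← sum_add_distrib, sum_congr rfl hpair,
    sum_ite_eq' _ _ _, if_pos (mem_erase.2 ⟨hi, mem_univ i⟩)]

theorem imPart_mul_self : imPart v x * imPart v x = (-imNormSq x) • 1 := by
  have h2 : (2 : ℝ) • (imPart v x * imPart v x) = (2 : ℝ) • ((-imNormSq x) • 1) := by
    calc (2 : ℝ) • (imPart v x * imPart v x)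
        = imPart v x * imPart v x + imPart v x * imPart v x := two_smul ℝ _
      _ = ∑ i ∈ univ.erase 0, x i • (v i * imPart v x + imPart v x * v i) := by
        conv_lhs => enter [1, 1]; rw [imPart]
        conv_lhs => enter [2, 2]; rw [imPart]
        simp only [hbil.mul_sum, hbil.sum_mul, ← sum_add_distrib, hbil.mul_smul, hbil.smul_mul,
          smul_add]
      _ = ∑ i ∈ univ.erase 0, (-2 * x i ^ 2) • (1 : 𝔸) := by
        refine sum_congr rfl fun i hi => ?_
        rw [mul_imPart_add_imPart_mul x hbil hsq hanti (ne_of_mem_erase hi), smul_smul]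
        module
      _ = (2 : ℝ) • ((-imNormSq x) • 1) := by
        rw [← sum_smul, smul_smul, imNormSq, ← mul_sum]
        module
  exact smul_right_injective 𝔸 two_ne_zero h2

end Clifford

theorem natCast_mul_pow_sub_one_mul {M : Type*} [Semiring M] (α : M) (n : ℕ) :
    (n : M) * α ^ (n - 1) * α = n * α ^ n := by
  cases n <;> simp [pow_succ, mul_assoc]

section RadialCoeff

variable {R : Type*} [CommRing R] {a : R}

def radialCoeff (α : QuadraticAlgebra R a 0) : ℕ → QuadraticAlgebra R a 0
  | 0 => 0
  | n + 1 => radialCoeff α n * α - algebraMap R _ (2 * (α ^ n).im)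

theorem natCast_mul_pow_add_omega_mul_radialCoeff {α : QuadraticAlgebra R a 0} (hα : α.im = 1) :
    ∀ n : ℕ, (n : QuadraticAlgebra R a 0) * α ^ (n - 1) + ω * radialCoeff α n
      = algebraMap R _ (α ^ n).im
  | 0 => by simp [radialCoeff]
  | n + 1 => by
    have ih := natCast_mul_pow_add_omega_mul_radialCoeff hα n
    have hstep : α ^ n + algebraMap R _ (α ^ n).im * α - ω * algebraMap R _ (2 * (α ^ n).im)
        = algebraMap R _ (α ^ (n + 1)).im := by
      ext
      · simp [pow_succ, hα]
      · simp [pow_succ, hα]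
        ring
    rw [radialCoeff, Nat.add_sub_cancel, ← hstep]
    push_cast
    linear_combination α * ih - natCast_mul_pow_sub_one_mul α n

end RadialCoeff

section Powers

variable {𝔸 : Type*} [NormedAddCommGroup 𝔸] [NormedSpace ℝ 𝔸] (x : Fin (m + 1) → ℝ)

theorem hasFDerivAt_iot (v : Fin (m + 1) → 𝔸) :
    HasFDerivAt (iot v) (Fintype.linearCombination ℝ v).toContinuousLinearMap x := by
  have : iot v = (Fintype.linearCombination ℝ v).toContinuousLinearMap :=
    funext fun c => (Fintype.linearCombination_apply ℝ v c).symm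
  exact this ▸ ContinuousLinearMap.hasFDerivAt _

variable [One 𝔸] [Mul 𝔸] {v : Fin (m + 1) → 𝔸}
  (hbil : IsBoundedBilinearMap ℝ fun p : 𝔸 × 𝔸 => p.1 * p.2)
  (hone : ∀ b : 𝔸, 1 * b = b) (hone' : ∀ b : 𝔸, b * 1 = b) (hv0 : v 0 = 1)
  (hsq : ∀ i : Fin (m + 1), i ≠ 0 → v i * v i = -1)
  (hanti : ∀ i j : Fin (m + 1), i ≠ 0 → j ≠ 0 → i ≠ j → v i * v j = -(v j * v i))
include hbil

theorem pd_pw_iot_succ (i : Fin (m + 1)) (n : ℕ) :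
    pd i (fun c => pw (iot v c) (n + 1)) x
      = pw (iot v x) n * v i + pd i (fun c => pw (iot v c) n) x * iot v x := by
  rw [pd, pd, fderiv_pw_succ_apply hbil (hasFDerivAt_iot x v).differentiableAt,
    (hasFDerivAt_iot x v).fderiv]
  simp [Fintype.linearCombination_apply_single]

include hone hone' hv0 hsq hanti

theorem pd_zero_pw_iot :
    ∀ n : ℕ, pd 0 (fun c => pw (iot v c) n) x
      = quadLift (imPart v x) ((n : QuadraticAlgebra ℝ _ 0) * quadPoint x ^ (n - 1))
  | 0 => by simp [pd, pw]
  | n + 1 => by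
    rw [pd_pw_iot_succ x hbil, pd_zero_pw_iot n, hv0, hone', iot_eq_quadLift x hv0,
      pw_quadLift hbil hone hone' (imPart_mul_self x hbil hsq hanti),
      ← quadLift_mul hbil hone hone' (imPart_mul_self x hbil hsq hanti), ← map_add,
      natCast_mul_pow_sub_one_mul, Nat.add_sub_cancel]
    push_cast
    congr 1
    ring

theorem pd_pw_iot_of_ne_zero {i : Fin (m + 1)} (hi : i ≠ 0) :
    ∀ n : ℕ, pd i (fun c => pw (iot v c) n) x
      = x i • quadLift (imPart v x) (radialCoeff (quadPoint x) n) + (quadPoint x ^ n).im • v i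
  | 0 => by simp [pd, pw, radialCoeff]
  | n + 1 => by
    have hw := imPart_mul_self x hbil hsq hanti
    have hvα : v i * quadLift (imPart v x) (quadPoint x)
        = x 0 • v i + (-2 * x i) • 1 - imPart v x * v i := by
      rw [← mul_imPart_add_imPart_mul x hbil hsq hanti hi]
      simp only [quadLift_apply, quadPoint, hbil.mul_add, hbil.mul_smul, hone', one_smul]
      abel
    have hpv : quadLift (imPart v x) (quadPoint x ^ n) * v i
        = (quadPoint x ^ n).re • v i + (quadPoint x ^ n).im • (imPart v x * v i) := by
      simp only [quadLift_apply, hbil.add_mul, hbil.smul_mul, hone]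
    rw [pd_pw_iot_succ x hbil, pd_pw_iot_of_ne_zero hi n, iot_eq_quadLift x hv0,
      pw_quadLift hbil hone hone' hw, hbil.add_mul, hbil.smul_mul, hbil.smul_mul, hvα, hpv,
      ← quadLift_mul hbil hone hone' hw, radialCoeff, map_sub, quadLift_algebraMap]
    simp only [pow_succ, im_mul, quadPoint]
    module

theorem pw_iot_sub_pw_iotConj (n : ℕ) :
    pw (iot v x) n - pw (iotConj v x) n = (quadPoint x ^ n).im • (iot v x - iotConj v x) := by
  have hw := imPart_mul_self x hbil hsq hanti
  rw [iot_eq_quadLift x hv0, iotConj_eq_quadLift, pw_quadLift hbil hone hone' hw,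
    pw_quadLift hbil hone hone' hw, ← star_pow, quadLift_sub_quadLift_star,
    quadLift_sub_quadLift_star, smul_smul]
  simp [quadPoint, mul_comm]

end Powers

theorem dbar_pow
    (hbil : IsBoundedBilinearMap ℝ fun p : A × A => p.1 * p.2)
    (hone : ∀ a : A, 1 * a = a) (hone' : ∀ a : A, a * 1 = a)
    (v : Fin (m + 1) → A) (hv0 : v 0 = 1)
    (hsq : ∀ i : Fin (m + 1), i ≠ 0 → v i * v i = -1)
    (hanti : ∀ i j : Fin (m + 1), i ≠ 0 → j ≠ 0 → i ≠ j → v i * v j = -(v j * v i))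
    (n : ℕ) (x : Fin (m + 1) → ℝ)
    (y : A)
    (hy1 : y * (iot v x - iotConj v x) = 1) :
    dbar v (fun c => pw (iot v c) n) x
      = (((1 : ℝ) - m) / 2) • (y * (pw (iot v x) n - pw (iotConj v x) n)) := by
  have hw := imPart_mul_self x hbil hsq hanti
  have hpd : ∀ i ∈ univ.erase 0, v i * pd i (fun c => pw (iot v c) n) x
      = v i * (x i • quadLift (imPart v x) (radialCoeff (quadPoint x) n)
          + (quadPoint x ^ n).im • v i) := fun i hi => by
    rw [pd_pw_iot_of_ne_zero x hbil hone hone' hv0 hsq hanti (ne_of_mem_erase hi)]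
  have hω : imPart v x * quadLift (imPart v x) (radialCoeff (quadPoint x) n)
      = quadLift (imPart v x) (ω * radialCoeff (quadPoint x) n) := by
    rw [quadLift_mul hbil hone hone' hw, quadLift_omega]
  rw [dbar, sum_congr rfl hpd, sum_mul_smul_add_smul x hbil hsq, hω,
    pd_zero_pw_iot x hbil hone hone' hv0 hsq hanti, ← add_sub_assoc, ← map_add,
    natCast_mul_pow_add_omega_mul_radialCoeff rfl, quadLift_algebraMap,
    pw_iot_sub_pw_iotConj x hbil hone hone' hv0 hsq hanti, hbil.mul_smul, hy1]
  module

end PaperStmt
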